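/- Let 𝔛=(X,{R_i}_{i=0}^d) be a commutative association scheme generated by a non-symmetric relation R_1 satisfying R_1^2 ⊆ {R_1,R_{1*},R_2}, R_1R_{1*} ⊆ {R_0,R_1,R_{1*},R_2,R_{2*}}, and 2 ∉ {1*,2*}, with k_1 = k_2 > 1. Then the set I := {i : R_i ∈ R_1^2} has |I| ≥ 2; that is, R_1^2 consists of at least two relations. -/
import Mathlib


/-- A `d`-class association scheme on a finite set `X`, with relations
`R 0, …, R d`, transposition map `star` (so that `Rᵢᵀ = R (star i)`) and
intersection numbers `p i j l = |Rᵢ(x) ∩ R_{j*}(y)|` for `(x,y) ∈ R l`. -/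
structure AssocScheme (X : Type*) [Fintype X] (d : ℕ) where
  R : Fin (d + 1) → X → X → Prop
  star : Fin (d + 1) → Fin (d + 1)
  p : Fin (d + 1) → Fin (d + 1) → Fin (d + 1) → ℕ
  R_nonempty : ∀ i, ∃ x y, R i x y
  R_diag : ∀ x y, R 0 x y ↔ x = y
  R_partition : ∀ x y, ∃! i, R i x y
  R_star : ∀ i x y, R i x y ↔ R (star i) y x
  p_count : ∀ i j l x y, R l x y →
    p i j l = Set.ncard {z | R i x z ∧ R (star j) y z}

namespace AssocScheme

variable {X : Type*} [Fintype X] {d : ℕ}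

/-- The valency `kᵢ = p_{i,i*}^0` of the relation `Rᵢ`. -/
def valency (A : AssocScheme X d) (i : Fin (d + 1)) : ℕ := A.p i (A.star i) 0

/-- A scheme is commutative if `p_{i,j}^l = p_{j,i}^l` for all `i,j,l`. -/
def IsCommutative (A : AssocScheme X d) : Prop := ∀ i j l, A.p i j l = A.p j i l

/-- The index set of the complex product `Rᵢ Rⱼ`, i.e. `{l | p_{i,j}^l ≠ 0}`. -/
def prodIdx (A : AssocScheme X d) (i j : Fin (d + 1)) : Set (Fin (d + 1)) :=
  {l | A.p i j l ≠ 0}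

/-- A set of relations (given by its index set) is closed if it is closed
under `R_{i*} R_j`. -/
def IsClosed (A : AssocScheme X d) (F : Set (Fin (d + 1))) : Prop :=
  ∀ i ∈ F, ∀ j ∈ F, ∀ l, A.p (A.star i) j l ≠ 0 → l ∈ F

/-- `Rⱼ` generates the scheme if the smallest closed subset containing `Rⱼ`
consists of all relations. -/
def Generates (A : AssocScheme X d) (j : Fin (d + 1)) : Prop :=
  ∀ F : Set (Fin (d + 1)), A.IsClosed F → j ∈ F → F = Set.univ

end AssocScheme

namespace AssocScheme

variable {X : Type*} [Fintype X] {d : ℕ} (A : AssocScheme X d)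

lemma rel_unique {i j : Fin (d+1)} {x y : X} (h1 : A.R i x y) (h2 : A.R j x y) : i = j :=
  (A.R_partition x y).unique h1 h2

lemma star_star (i : Fin (d+1)) : A.star (A.star i) = i := by
  obtain ⟨x, y, hxy⟩ := A.R_nonempty i
  have h2 : A.R (A.star (A.star i)) x y := by
    rw [← A.R_star]; rw [← A.R_star]; exact hxy
  exact A.rel_unique h2 hxy

lemma R_star' {i : Fin (d+1)} {x y : X} : A.R (A.star i) x y ↔ A.R i y x :=
  (A.R_star i y x).symm

lemma tri {i j l : Fin (d+1)} (hp : A.p i j l ≠ 0) :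
    ∃ x z y, A.R i x z ∧ A.R j z y ∧ A.R l x y := by
  obtain ⟨x, y, hxy⟩ := A.R_nonempty l
  rw [A.p_count i j l x y hxy] at hp
  obtain ⟨z, hz1, hz2⟩ := Set.nonempty_of_ncard_ne_zero hp
  exact ⟨x, z, y, hz1, (A.R_star j z y).mpr hz2, hxy⟩

lemma p_ne {i j l : Fin (d+1)} {x z y : X} (hi : A.R i x z) (hj : A.R j z y)
    (hl : A.R l x y) : A.p i j l ≠ 0 := by
  rw [A.p_count i j l x y hl]
  have hz : z ∈ {w | A.R i x w ∧ A.R (A.star j) y w} := ⟨hi, (A.R_star j z y).mp hj⟩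
  exact ((Set.ncard_pos (Set.toFinite _)).mpr ⟨z, hz⟩).ne'

lemma ncard_out (i : Fin (d+1)) (x : X) : {z | A.R i x z}.ncard = A.valency i := by
  have h0 : A.R 0 x x := (A.R_diag x x).mpr rfl
  rw [valency, A.p_count i (A.star i) 0 x x h0]
  congr 1
  ext z
  simp [A.star_star i, A.R_star']

lemma valency_star (hcomm : A.IsCommutative) (i : Fin (d+1)) :
    A.valency (A.star i) = A.valency i := by
  rw [valency, valency, A.star_star i, hcomm]

lemma ncard_in (hcomm : A.IsCommutative) (i : Fin (d+1)) (z : X) :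
    {u | A.R i u z}.ncard = A.valency i := by
  have h : {u | A.R i u z} = {u | A.R (A.star i) z u} := by
    ext u; simp [A.R_star']
  rw [h, A.ncard_out (A.star i) z, A.valency_star hcomm]

lemma star_zero : A.star 0 = 0 := by
  obtain ⟨x, _, _⟩ := A.R_nonempty 0
  have h0 : A.R 0 x x := (A.R_diag x x).mpr rfl
  exact A.rel_unique ((A.R_star 0 x x).mp h0) h0

end AssocScheme


theorem sq_has_at_least_two_relations
    {X : Type*} [Fintype X] {d : ℕ} (A : AssocScheme X d)
    (hd : 2 ≤ d)
    (hcomm : A.IsCommutative)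
    (hgen : A.Generates 1)
    (hns : A.star 1 ≠ 1)
    (h1a : A.prodIdx 1 1 ⊆ {1, A.star 1, 2})
    (h1b : A.prodIdx 1 (A.star 1) ⊆ {0, 1, A.star 1, 2, A.star 2})
    (h1c : (2 : Fin (d + 1)) ≠ A.star 1 ∧ (2 : Fin (d + 1)) ≠ A.star 2)
    (hk : A.valency 1 = A.valency 2)
    (hk1 : 1 < A.valency 1)
    :
    2 ≤ (A.prodIdx 1 1).ncard := by
  classical
  -- numeral facts in `Fin (d+1)`
  have h1v : (1 : Fin (d+1)).val = 1 := by
    rw [Fin.val_one']; exact Nat.mod_eq_of_lt (by omega)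
  have h2v : (2 : Fin (d+1)).val = 2 := by
    have h3 : 2 < d + 1 := by omega
    simpa using Fin.val_cast_of_lt (a := 2) h3
  have h01 : (0 : Fin (d+1)) ≠ 1 := by
    intro h; have := congrArg Fin.val h; rw [h1v] at this; simp at this
  have h02 : (0 : Fin (d+1)) ≠ 2 := by
    intro h; have := congrArg Fin.val h; rw [h2v] at this; simp at this
  have h12 : (1 : Fin (d+1)) ≠ 2 := by
    intro h; have := congrArg Fin.val h; rw [h1v, h2v] at this; simp at this
  have sumfil : ∀ (P : X → Prop) (inst : DecidablePred P),
      (∑ x : X, @ite ℕ (P x) (inst x) 1 0) = {x | P x}.ncard := by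
    intro P inst
    have hset : {x | P x} = ↑(Finset.univ.filter P) := by ext x; simp
    rw [hset, Set.ncard_coe_finset, Finset.card_filter]
  by_contra hcon
  push_neg at hcon
  set k := A.valency 1 with hkdef
  -- a vertex with an out-edge
  obtain ⟨x₁, z₁, hxz₁⟩ := A.R_nonempty 1
  obtain ⟨y₁, hy₁⟩ := Set.nonempty_of_ncard_ne_zero
    (s := {u | A.R 1 z₁ u}) (by rw [A.ncard_out]; omega)
  obtain ⟨l₁, hl₁, -⟩ := A.R_partition x₁ y₁
  have hne : (A.prodIdx 1 1).Nonempty := ⟨l₁, A.p_ne hxz₁ hy₁ hl₁⟩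
  have hone : (A.prodIdx 1 1).ncard = 1 := by
    have := (Set.ncard_pos (Set.toFinite _)).mpr hne; omega
  obtain ⟨c, hc⟩ := Set.ncard_eq_one.mp hone
  have hcmem : c ∈ A.prodIdx 1 1 := by rw [hc]; exact Set.mem_singleton c
  have hcin := h1a hcmem
  simp only [Set.mem_insert_iff, Set.mem_singleton_iff] at hcin
  have Hstep : ∀ x z y, A.R 1 x z → A.R 1 z y → A.R c x y := by
    intro x z y h1 h2
    obtain ⟨l, hl, -⟩ := A.R_partition x y
    have hmem : l ∈ A.prodIdx 1 1 := A.p_ne h1 h2 hl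
    rw [hc, Set.mem_singleton_iff] at hmem
    rwa [← hmem]
  rcases hcin with hc1 | hc1 | hc1
  · -- c = 1 : R₁ would be "transitive", impossible
    subst hc1
    have hsub : {u | A.R 1 z₁ u} ⊆ {u | A.R 1 x₁ u} := fun u hu => Hstep _ _ _ hxz₁ hu
    have heq := Set.eq_of_subset_of_ncard_le hsub
      (by rw [A.ncard_out, A.ncard_out]) (Set.toFinite _)
    have hz1z1 : A.R 1 z₁ z₁ := by
      have hmem : z₁ ∈ {u | A.R 1 x₁ u} := hxz₁
      rw [← heq] at hmem; exact hmem
    exact h01 (A.rel_unique ((A.R_diag z₁ z₁).mpr rfl) hz1z1)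
  · -- c = star 1 : directed 3-cycles
    subst hc1
    have cyc : ∀ a b e, A.R 1 a b → A.R 1 b e → A.R 1 e a := by
      intro a b e h1 h2
      exact (A.R_star').mp (Hstep a b e h1 h2)
    by_cases hp2 : A.p 1 (A.star 1) 2 ≠ 0
    · -- all R₂-pairs have equal out-neighbourhoods; counting contradiction
      have eqout : ∀ x y z, A.R 1 x z → A.R 1 y z →
          {u | A.R 1 x u} ⊆ {u | A.R 1 y u} := by
        intro x y z hxz hyz u hu
        obtain ⟨w, hw⟩ := Set.nonempty_of_ncard_ne_zero
          (s := {u | A.R 1 z u}) (by rw [A.ncard_out]; omega)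
        have hwx : A.R 1 w x := cyc x z w hxz hw
        have hwy : A.R 1 w y := cyc y z w hyz hw
        have huw : A.R 1 u w := cyc w x u hwx hu
        exact cyc u w y huw hwy
      have allR2 : ∀ a b, A.R 2 a b → {u | A.R 1 a u} ⊆ {u | A.R 1 b u} := by
        intro a b hab
        have hp := hp2
        rw [A.p_count 1 (A.star 1) 2 a b hab] at hp
        obtain ⟨z, hza, hzb⟩ := Set.nonempty_of_ncard_ne_zero hp
        rw [A.star_star] at hzb
        exact eqout a b z hza hzb
      have hsub2 : insert x₁ {b | A.R 2 x₁ b} ⊆ {u | A.R 1 u z₁} := by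
        intro b hb
        rcases hb with rfl | hb
        · exact hxz₁
        · exact allR2 x₁ b hb hxz₁
      have hxnot : x₁ ∉ {b | A.R 2 x₁ b} := by
        intro hx
        exact h02 (A.rel_unique ((A.R_diag x₁ x₁).mpr rfl) hx)
      have hcard2 : {b | A.R 2 x₁ b}.ncard = k := by
        rw [A.ncard_out]; exact hk.symm
      have hcardin : {u | A.R 1 u z₁}.ncard = k := A.ncard_in hcomm 1 z₁
      have hle := Set.ncard_le_ncard hsub2 (Set.toFinite _)
      rw [Set.ncard_insert_of_notMem hxnot (Set.toFinite _), hcard2, hcardin] at hle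
      omega
    · -- {0, 1, star 1} is closed, contradicting generation
      push_neg at hp2
      have hp2' : A.p 1 (A.star 1) (A.star 2) = 0 := by
        by_contra hp'
        obtain ⟨x, z, y, hxz, hzy, hxy⟩ := A.tri hp'
        rw [A.R_star'] at hzy
        rw [A.R_star'] at hxy
        exact (A.p_ne hzy ((A.R_star 1 x z).mp hxz) hxy) hp2
      have prod0 : ∀ j l, A.p 0 j l ≠ 0 → l = j := by
        intro j l hp
        obtain ⟨x, z, y, hxz, hzy, hxy⟩ := A.tri hp
        have := (A.R_diag x z).mp hxz
        subst this
        exact A.rel_unique hxy hzy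
      have prodr0 : ∀ i l, A.p i 0 l ≠ 0 → l = i := by
        intro i l hp
        obtain ⟨x, z, y, hxz, hzy, hxy⟩ := A.tri hp
        have := (A.R_diag z y).mp hzy
        subst this
        exact A.rel_unique hxy hxz
      have prod11 : ∀ l, A.p 1 1 l ≠ 0 → l = A.star 1 := by
        intro l hp
        have hmem : l ∈ A.prodIdx 1 1 := hp
        rwa [hc, Set.mem_singleton_iff] at hmem
      have prods1 : ∀ l, A.p (A.star 1) (A.star 1) l ≠ 0 → l = 1 := by
        intro l hp
        obtain ⟨x, z, y, hxz, hzy, hxy⟩ := A.tri hp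
        rw [A.R_star'] at hxz
        rw [A.R_star'] at hzy
        exact A.rel_unique hxy (cyc y z x hzy hxz)
      have prod1s1 : ∀ l, A.p 1 (A.star 1) l ≠ 0 →
          l = 0 ∨ l = 1 ∨ l = A.star 1 := by
        intro l hp
        have hmem : l ∈ A.prodIdx 1 (A.star 1) := hp
        have := h1b hmem
        simp only [Set.mem_insert_iff, Set.mem_singleton_iff] at this
        rcases this with h | h | h | h | h
        · exact Or.inl h
        · exact Or.inr (Or.inl h)
        · exact Or.inr (Or.inr h)
        · exact absurd (h ▸ hp) (by rw [hp2]; simp)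
        · exact absurd (h ▸ hp) (by rw [hp2']; simp)
      have hF : A.IsClosed {0, 1, A.star 1} := by
        intro i hi j hj l hl
        simp only [Set.mem_insert_iff, Set.mem_singleton_iff] at hi hj ⊢
        rcases hi with rfl | rfl | rfl
        · rw [A.star_zero] at hl
          rcases hj with rfl | rfl | rfl
          · exact Or.inl (prod0 _ _ hl)
          · exact Or.inr (Or.inl (prod0 _ _ hl))
          · exact Or.inr (Or.inr (prod0 _ _ hl))
        · rcases hj with rfl | rfl | rfl
          · exact Or.inr (Or.inr (prodr0 _ _ hl))
          · rw [hcomm] at hl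
            exact prod1s1 _ hl
          · exact Or.inr (Or.inl (prods1 _ hl))
        · rw [A.star_star] at hl
          rcases hj with rfl | rfl | rfl
          · exact Or.inr (Or.inl (prodr0 _ _ hl))
          · exact Or.inr (Or.inr (prod11 _ hl))
          · exact prod1s1 _ hl
      have huniv := hgen _ hF (by simp)
      have h2mem : (2 : Fin (d+1)) ∈ ({0, 1, A.star 1} : Set (Fin (d+1))) := by
        rw [huniv]; trivial
      simp only [Set.mem_insert_iff, Set.mem_singleton_iff] at h2mem
      rcases h2mem with h | h | h
      · exact h02 h.symm
      · exact h12 h.symm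
      · exact h1c.1 h
  · -- c = 2
    subst hc1
    have hp112 : A.p 1 1 2 = k := by
      have hA : ∀ z : X, (∑ y : X, if A.R 1 x₁ z ∧ A.R 1 z y then 1 else 0)
          = if A.R 1 x₁ z then k else 0 := by
        intro z
        by_cases hz : A.R 1 x₁ z
        · simp only [hz, true_and, if_true]
          rw [sumfil, A.ncard_out]
        · simp [hz]
      have hB : ∀ y : X, (∑ z : X, if A.R 1 x₁ z ∧ A.R 1 z y then 1 else 0)
          = if A.R 2 x₁ y then A.p 1 1 2 else 0 := by
        intro y
        by_cases hy : A.R 2 x₁ y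
        · rw [if_pos hy]
          rw [sumfil, A.p_count 1 1 2 x₁ y hy]
          congr 1
          ext z
          simp only [Set.mem_setOf_eq, A.R_star']
        · rw [if_neg hy]
          refine Finset.sum_eq_zero (fun z _ => ?_)
          rw [if_neg]
          rintro ⟨ha, hb⟩
          exact hy (Hstep _ _ _ ha hb)
      have hAB : (∑ z : X, ∑ y : X, if A.R 1 x₁ z ∧ A.R 1 z y then 1 else 0)
          = k * k := by
        have hmul : (∑ z : X, if A.R 1 x₁ z then k else 0)
            = k * (∑ z : X, if A.R 1 x₁ z then 1 else 0) := by
          rw [Finset.mul_sum]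
          exact Finset.sum_congr rfl (fun z _ => by split <;> simp)
        rw [Finset.sum_congr rfl (fun z _ => hA z), hmul, sumfil, A.ncard_out]
      have hBA : (∑ y : X, ∑ z : X, if A.R 1 x₁ z ∧ A.R 1 z y then 1 else 0)
          = k * A.p 1 1 2 := by
        have hmul : (∑ y : X, if A.R 2 x₁ y then A.p 1 1 2 else 0)
            = A.p 1 1 2 * (∑ y : X, if A.R 2 x₁ y then 1 else 0) := by
          rw [Finset.mul_sum]
          exact Finset.sum_congr rfl (fun y _ => by split <;> simp)
        rw [Finset.sum_congr rfl (fun y _ => hB y), hmul, sumfil, A.ncard_out,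
          ← hk, Nat.mul_comm]
      have := hAB.symm.trans ((Finset.sum_comm).trans hBA)
      exact (Nat.eq_of_mul_eq_mul_left (by omega) this).symm
    have C2 : ∀ a b, A.R 2 a b → ∀ u, A.R 1 a u → A.R 1 u b := by
      intro a b hab u hau
      have h1 : A.p 1 1 2 = {z | A.R 1 a z ∧ A.R 1 z b}.ncard := by
        rw [A.p_count 1 1 2 a b hab]
        congr 1
        ext z
        simp only [Set.mem_setOf_eq, A.R_star']
      have hsub : {z | A.R 1 a z ∧ A.R 1 z b} ⊆ {z | A.R 1 a z} :=
        fun z hz => hz.1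
      have heq := Set.eq_of_subset_of_ncard_le hsub
        (by rw [A.ncard_out, ← h1, hp112]) (Set.toFinite _)
      have hmem : u ∈ {z | A.R 1 a z ∧ A.R 1 z b} := by rw [heq]; exact hau
      exact hmem.2
    have final : ∀ a b, A.R 1 x₁ a → A.R 1 x₁ b → A.R 2 a b → False := by
      intro a b ha hb hab
      obtain ⟨y, hy⟩ := Set.nonempty_of_ncard_ne_zero
        (s := {u | A.R 1 a u}) (by rw [A.ncard_out]; omega)
      have h1 : A.R 1 y b := C2 a b hab y hy
      have h2 : A.R 2 x₁ y := Hstep _ _ _ ha hy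
      have h3 : A.R 1 b y := C2 x₁ y h2 b hb
      exact hns (A.rel_unique ((A.R_star 1 b y).mp h3) h1)
    have htwo : 1 < {z | A.R 1 x₁ z}.ncard := by rw [A.ncard_out]; exact hk1
    obtain ⟨z, z', hz, hz', hzz'⟩ := (Set.one_lt_ncard_iff (Set.toFinite _)).mp htwo
    obtain ⟨m, hm, -⟩ := A.R_partition z z'
    have hmem : m ∈ A.prodIdx 1 (A.star 1) := by
      have hne' : A.p (A.star 1) 1 m ≠ 0 :=
        A.p_ne ((A.R_star 1 x₁ z).mp hz) hz' hm
      show A.p 1 (A.star 1) m ≠ 0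
      rw [hcomm]; exact hne'
    have hmm := h1b hmem
    simp only [Set.mem_insert_iff, Set.mem_singleton_iff] at hmm
    rcases hmm with h | h | h | h | h
    · subst h
      exact hzz' ((A.R_diag z z').mp hm)
    · subst h
      have : A.R 2 x₁ z' := Hstep _ _ _ hz hm
      exact h12 (A.rel_unique hz' this)
    · subst h
      rw [A.R_star'] at hm
      have : A.R 2 x₁ z := Hstep _ _ _ hz' hm
      exact h12 (A.rel_unique hz this)
    · subst h
      exact final z z' hz hz' hm
    · subst h
      rw [A.R_star'] at hm
      exact final z' z hz' hz hm
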